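/- arXiv:1810.05249 — 2 statements merged into one kernel-verified Lean document; each statement's English description precedes it below -/
import Mathlib

section
/- Let p and q be primes with p ≡ 1 (mod 4), q ≡ 3 (mod 4), and q a nonsquare modulo p (Legendre symbol (q|p) = −1). Then the quaternion algebra ℍ[ℚ, −q, −p] is the definite quaternion algebra of discriminant p: for every prime ℓ, the localization ℍ[ℚ_ℓ, −q, −p] is a division ring if and only if ℓ = p, and ℍ[ℝ, −q, −p] is a division ring. -/
/-!
Over a field, a quaternion algebra is a division ring exactly when its reduced norm, here
`r² + q x² + p y² + q p z²`, has no nontrivial zero. Over `ℝ` the norm is positive definite.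
Over `ℚ_p` it is `⟨1, q⟩ ⊥ p ⟨1, q⟩`, and `⟨1, q⟩` is anisotropic modulo `p` because `-q` is a
nonsquare there; so a zero in `ℤ_p` has all coordinates divisible by `p`, and infinite descent
leaves only the trivial zero. For `ℓ ≠ p`, Hensel's lemma lifts a zero of `r² + q x² + p` modulo
`ℓ` (which exists by counting squares when `ℓ ∤ 2q`, and because `-p` is a square modulo `q` by
quadratic reciprocity when `ℓ = q`), or of `r² + q + p + q p` modulo `8` when `ℓ = 2`, to a
zero in `ℤ_ℓ`.
-/

open Quaternion

namespace QuaternionAlgebra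

variable {K : Type*} [Field K] {c₁ c₂ c₃ : K}

theorem isUnit_iff_re_mul_star_ne_zero {a : ℍ[K,c₁,c₂,c₃]} :
    IsUnit a ↔ (a * star a).re ≠ 0 := by
  obtain ⟨n, hn⟩ : ∃ n : K, a * star a = n := ⟨_, mul_star_eq_coe a⟩
  rw [hn, re_coe]
  constructor
  · rintro ⟨u, rfl⟩ rfl
    have hstar : star (u : ℍ[K,c₁,c₂,c₃]) = 0 := by
      simpa using congrArg ((↑u⁻¹ : ℍ[K,c₁,c₂,c₃]) * ·) hn
    exact u.ne_zero (star_eq_zero.mp hstar)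
  · intro h0
    refine ⟨⟨a, n⁻¹ • star a, ?_, ?_⟩, rfl⟩
    · rw [mul_smul_comm, hn, smul_coe, inv_mul_cancel₀ h0, coe_one]
    · rw [smul_mul_assoc, star_comm_self', hn, smul_coe, inv_mul_cancel₀ h0, coe_one]

theorem forall_ne_zero_isUnit_iff :
    (∀ a : ℍ[K,c₁,c₂,c₃], a ≠ 0 → IsUnit a) ↔
      ∀ a : ℍ[K,c₁,c₂,c₃], (a * star a).re = 0 → a = 0 := by
  simp only [isUnit_iff_re_mul_star_ne_zero, ne_eq, not_imp_not]

theorem re_mul_star_neg_neg {R : Type*} [CommRing R] {c d : R} (a : ℍ[R,-c,-d]) :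
    (a * star a).re = a.re ^ 2 + c * a.imI ^ 2 + d * a.imJ ^ 2 + c * d * a.imK ^ 2 := by
  simp only [re_mul, re_star, imI_star, imJ_star, imK_star, zero_mul, add_zero, neg_mul, mul_neg,
    neg_neg, neg_zero, sub_neg_eq_add]
  ring

theorem forall_ne_zero_isUnit_of_pos [LinearOrder K] [IsStrictOrderedRing K]
    {c d : K} (hc : 0 < c) (hd : 0 < d) :
    ∀ a : ℍ[K,-c,-d], a ≠ 0 → IsUnit a := by
  rw [forall_ne_zero_isUnit_iff]
  intro a ha
  rw [re_mul_star_neg_neg] at ha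
  have h₁ := sq_nonneg a.re
  have h₂ := mul_nonneg hc.le (sq_nonneg a.imI)
  have h₃ := mul_nonneg hd.le (sq_nonneg a.imJ)
  have h₄ := mul_nonneg (mul_pos hc hd).le (sq_nonneg a.imK)
  ext
  · exact pow_eq_zero_iff two_ne_zero |>.1 (by linarith)
  · simpa [hc.ne'] using (by linarith : c * a.imI ^ 2 = 0)
  · simpa [hd.ne'] using (by linarith : d * a.imJ ^ 2 = 0)
  · simpa [hc.ne', hd.ne'] using (by linarith : c * d * a.imK ^ 2 = 0)

end QuaternionAlgebra

namespace PadicInt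

open Polynomial

variable {p : ℕ} [Fact p.Prime]

theorem toZMod_eq_zero_iff_norm_lt_one {x : ℤ_[p]} : toZMod x = 0 ↔ ‖x‖ < 1 := by
  rw [← RingHom.mem_ker, ker_toZMod, IsLocalRing.mem_maximalIdeal, mem_nonunits]

theorem toZMod_eq_zero_iff_dvd {x : ℤ_[p]} : toZMod x = 0 ↔ (p : ℤ_[p]) ∣ x := by
  rw [toZMod_eq_zero_iff_norm_lt_one, norm_lt_one_iff_dvd]

theorem exists_mul_sq_add_eq_zero_of_norm_lt {c d t : ℤ_[p]}
    (h : ‖c * t ^ 2 + d‖ < ‖2 * c * t‖ ^ 2) : ∃ s : ℤ_[p], c * s ^ 2 + d = 0 := by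
  have hF : ‖(C c * X ^ 2 + C d).aeval t‖ < ‖(derivative (C c * X ^ 2 + C d)).aeval t‖ ^ 2 := by
    have hderiv : derivative (C c * X ^ 2 + C d) = 2 * C c * X := by
      simp only [derivative_mul, derivative_C, derivative_X_pow_succ, zero_mul,
        zero_add, add_zero, Nat.cast_one, map_add, map_one, pow_one]
      ring
    simpa [hderiv, mul_assoc] using h
  obtain ⟨s, hs, -⟩ := hensels_lemma hF
  exact ⟨s, by simpa using hs⟩

theorem exists_mul_sq_add_eq_zero {c d : ℤ_[p]} {a : ZMod p}
    (ha : toZMod c * a ^ 2 + toZMod d = 0) (h2 : 2 * toZMod c * a ≠ 0) :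
    ∃ s : ℤ_[p], c * s ^ 2 + d = 0 := by
  have hlift : toZMod (a.val : ℤ_[p]) = a := by rw [map_natCast, ZMod.natCast_zmod_val]
  apply exists_mul_sq_add_eq_zero_of_norm_lt (t := a.val)
  have hlt : ‖c * (a.val : ℤ_[p]) ^ 2 + d‖ < 1 := by
    rw [← toZMod_eq_zero_iff_norm_lt_one]; simpa [hlift] using ha
  have hone : ‖2 * c * (a.val : ℤ_[p])‖ = 1 := by
    refine le_antisymm (norm_le_one _) (not_lt.1 fun h => h2 ?_)
    rw [← toZMod_eq_zero_iff_norm_lt_one] at h; simpa [hlift, map_ofNat] using h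
  rwa [hone, one_pow]

theorem exists_sq_add_eq_zero_of_eight_dvd {d : ℤ_[2]} (h : (8 : ℤ_[2]) ∣ d + 1) :
    ∃ s : ℤ_[2], s ^ 2 + d = 0 := by
  obtain ⟨k, hk⟩ := h
  have h8 : ‖(8 : ℤ_[2])‖ = 2⁻¹ ^ 3 := by
    rw [show (8 : ℤ_[2]) = ((2 : ℕ) : ℤ_[2]) ^ 3 by norm_num, norm_pow, norm_p]; norm_num
  have h2 : ‖(2 : ℤ_[2])‖ = 2⁻¹ := by exact_mod_cast norm_p (p := 2)
  have hnorm : ‖1 * 1 ^ 2 + d‖ < ‖2 * 1 * (1 : ℤ_[2])‖ ^ 2 :=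
    calc ‖1 * 1 ^ 2 + d‖ = ‖(8 : ℤ_[2])‖ * ‖k‖ := by rw [← norm_mul, ← hk, add_comm]; simp
      _ ≤ 2⁻¹ ^ 3 := by rw [h8]; exact mul_le_of_le_one_right (by positivity) (norm_le_one k)
      _ < ‖2 * 1 * (1 : ℤ_[2])‖ ^ 2 := by rw [mul_one, mul_one, h2]; norm_num
  obtain ⟨s, hs⟩ := exists_mul_sq_add_eq_zero_of_norm_lt hnorm
  exact ⟨s, by simpa using hs⟩

theorem exists_sq_add_mul_sq_add_eq_zero (hp : p ≠ 2) {b c : ℤ_[p]} (hb : toZMod b ≠ 0)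
    (hc : toZMod c ≠ 0) : ∃ r x : ℤ_[p], r ^ 2 + b * x ^ 2 + c = 0 := by
  have hchar : ringChar (ZMod p) ≠ 2 := by rwa [ZMod.ringChar_zmod_n]
  obtain ⟨a, e, hae⟩ := FiniteField.exists_root_sum_quadratic (degree_X_pow 2)
    (degree_quadratic (b := 0) hb) (FiniteField.odd_card_of_char_ne_two hchar)
  simp only [eval_pow, eval_X, eval_add, eval_mul, eval_C, zero_mul, add_zero] at hae
  -- Hensel-lift whichever of the residues `a`, `e` is nonzero.
  by_cases ha : a = 0
  · have he : e ≠ 0 := by rintro rfl; apply hc; simpa [ha] using hae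
    obtain ⟨x, hx⟩ := exists_mul_sq_add_eq_zero (a := e) (by simpa [ha] using hae)
      (mul_ne_zero (mul_ne_zero (Ring.two_ne_zero hchar) hb) he)
    exact ⟨0, x, by linear_combination hx⟩
  · obtain ⟨r, hr⟩ :=
      exists_mul_sq_add_eq_zero (c := 1) (d := b * (e.val : ℤ_[p]) ^ 2 + c) (a := a)
      (by simpa [ZMod.natCast_zmod_val] using hae)
      (by simpa using mul_ne_zero (Ring.two_ne_zero hchar) ha)
    exact ⟨r, e.val, by linear_combination hr⟩

theorem eq_zero_of_forall_pow_dvd {x : ℤ_[p]} (h : ∀ n, (p : ℤ_[p]) ^ n ∣ x) : x = 0 := by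
  by_contra hx
  obtain ⟨n, hn⟩ := FiniteMultiplicity.of_prime_left prime_p hx
  exact hn (h _)

section Anisotropic

variable {c : ℤ_[p]} (hc : ¬IsSquare (-toZMod c))
include hc

theorem dvd_and_dvd_of_dvd_sq_add_mul_sq {u v : ℤ_[p]} (h : (p : ℤ_[p]) ∣ u ^ 2 + c * v ^ 2) :
    (p : ℤ_[p]) ∣ u ∧ (p : ℤ_[p]) ∣ v := by
  rw [← toZMod_eq_zero_iff_dvd, map_add, map_mul, map_pow, map_pow] at h
  simp only [← toZMod_eq_zero_iff_dvd]
  have hv : toZMod v = 0 := by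
    by_contra hv
    exact hc ⟨toZMod u / toZMod v, by field_simp; linear_combination -h⟩
  refine ⟨pow_eq_zero_iff two_ne_zero |>.1 ?_, hv⟩
  simpa [hv] using h

theorem pow_dvd_of_sq_add_mul_sq_add_p_mul (n : ℕ) {u v y z : ℤ_[p]}
    (h : u ^ 2 + c * v ^ 2 + p * (y ^ 2 + c * z ^ 2) = 0) :
    (p : ℤ_[p]) ^ n ∣ u ∧ (p : ℤ_[p]) ^ n ∣ v ∧ (p : ℤ_[p]) ^ n ∣ y ∧ (p : ℤ_[p]) ^ n ∣ z := by
  induction n generalizing u v y z with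
  | zero => simp
  | succ n ih =>
    have hp : (p : ℤ_[p]) ≠ 0 := prime_p.ne_zero
    obtain ⟨⟨u, rfl⟩, ⟨v, rfl⟩⟩ := dvd_and_dvd_of_dvd_sq_add_mul_sq hc (u := u) (v := v)
      ⟨-(y ^ 2 + c * z ^ 2), by linear_combination h⟩
    obtain ⟨⟨y, rfl⟩, ⟨z, rfl⟩⟩ := dvd_and_dvd_of_dvd_sq_add_mul_sq hc (u := y) (v := z)
      ⟨-(u ^ 2 + c * v ^ 2), mul_left_cancel₀ hp (by linear_combination h)⟩
    have h' : u ^ 2 + c * v ^ 2 + p * (y ^ 2 + c * z ^ 2) = 0 := by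
      refine mul_left_cancel₀ (pow_ne_zero 2 hp) ?_
      linear_combination h
    obtain ⟨hu, hv, hy, hz⟩ := ih h'
    rw [pow_succ']
    exact ⟨mul_dvd_mul_left _ hu, mul_dvd_mul_left _ hv, mul_dvd_mul_left _ hy,
      mul_dvd_mul_left _ hz⟩

theorem eq_zero_of_sq_add_mul_sq_add_p_mul {u v y z : ℤ_[p]}
    (h : u ^ 2 + c * v ^ 2 + p * (y ^ 2 + c * z ^ 2) = 0) : u = 0 ∧ v = 0 ∧ y = 0 ∧ z = 0 := by
  have hdvd := fun n => pow_dvd_of_sq_add_mul_sq_add_p_mul hc n h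
  exact ⟨eq_zero_of_forall_pow_dvd fun n => (hdvd n).1,
    eq_zero_of_forall_pow_dvd fun n => (hdvd n).2.1,
    eq_zero_of_forall_pow_dvd fun n => (hdvd n).2.2.1,
    eq_zero_of_forall_pow_dvd fun n => (hdvd n).2.2.2⟩

end Anisotropic

end PadicInt

theorem Padic.eq_zero_of_sq_add_mul_sq_add_p_mul {p : ℕ} [Fact p.Prime] {c : ℤ_[p]}
    (hc : ¬IsSquare (-PadicInt.toZMod c)) {r x y z : ℚ_[p]}
    (h : r ^ 2 + c * x ^ 2 + p * (y ^ 2 + c * z ^ 2) = 0) : r = 0 ∧ x = 0 ∧ y = 0 ∧ z = 0 := by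
  obtain ⟨⟨b, hb⟩, hint⟩ :=
    IsLocalization.exist_integer_multiples_of_finite (nonZeroDivisors ℤ_[p]) ![r, x, y, z]
  choose w hw using hint
  have hb0 : (b : ℚ_[p]) ≠ 0 := by simpa using nonZeroDivisors.ne_zero hb
  have hw' : ∀ i, (w i : ℚ_[p]) = b * ![r, x, y, z] i := by simpa [Algebra.smul_def] using hw
  obtain ⟨h0, h1, h2, h3⟩ := PadicInt.eq_zero_of_sq_add_mul_sq_add_p_mul hc
    (u := w 0) (v := w 1) (y := w 2) (z := w 3) <| PadicInt.ext <| by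
      push_cast
      simp only [hw', Matrix.cons_val_zero, Matrix.cons_val_one, Matrix.cons_val]
      linear_combination (b : ℚ_[p]) ^ 2 * h
  have hcoord : ∀ i, w i = 0 → ![r, x, y, z] i = 0 := fun i hi => by
    simpa [hi, hb0, eq_comm] using hw' i
  exact ⟨hcoord 0 h0, hcoord 1 h1, hcoord 2 h2, hcoord 3 h3⟩

theorem isSquare_neg_iff_of_isSquare_neg_one {R : Type*} [CommMonoid R] [HasDistribNeg R]
    (h : IsSquare (-1 : R)) (a : R) : IsSquare (-a) ↔ IsSquare a :=
  ⟨fun ha => by simpa using h.mul ha, fun ha => by simpa using h.mul ha⟩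

theorem ZMod.natCast_ne_zero_of_prime_of_ne {ℓ r : ℕ} [Fact ℓ.Prime] (hr : r.Prime) (h : ℓ ≠ r) :
    (r : ZMod ℓ) ≠ 0 := by
  rw [Ne, ZMod.natCast_eq_zero_iff, Nat.prime_dvd_prime_iff_eq Fact.out hr]
  exact h

theorem not_isSquare_neg_of_legendreSym_eq_neg_one {p q : ℕ} [Fact p.Prime] (hp4 : p % 4 = 1)
    (hleg : legendreSym p q = -1) :
    ¬IsSquare (-(q : ZMod p)) := by
  rw [isSquare_neg_iff_of_isSquare_neg_one (ZMod.exists_sq_eq_neg_one_iff.2 (by omega)),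
    ← legendreSym.eq_neg_one_iff']
  exact hleg

theorem isSquare_neg_of_legendreSym_eq_neg_one {p q : ℕ} [Fact p.Prime] [Fact q.Prime]
    (hp4 : p % 4 = 1) (hq4 : q % 4 = 3) (hleg : legendreSym p q = -1) :
    IsSquare (-(p : ZMod q)) := by
  have hleg' : legendreSym q p = -1 := by
    rw [legendreSym.quadratic_reciprocity_one_mod_four hp4 (by omega), hleg]
  have hp0 : ((-p : ℤ) : ZMod q) ≠ 0 := by
    simpa using ZMod.natCast_ne_zero_of_prime_of_ne (Fact.out : p.Prime) (by omega)
  have h : legendreSym q (-p) = 1 := by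
    rw [neg_eq_neg_one_mul, legendreSym.mul, legendreSym.at_neg_one (by omega),
      ZMod.χ₄_nat_three_mod_four hq4, hleg']
    norm_num
  simpa using (legendreSym.eq_one_iff q hp0).1 h

theorem exists_sq_add_mul_sq_add_add_mul_sq_eq_zero_of_ne {p q : ℕ} [Fact p.Prime] [Fact q.Prime]
    (hp4 : p % 4 = 1) (hq4 : q % 4 = 3) (hleg : legendreSym p q = -1)
    (ℓ : ℕ) [Fact ℓ.Prime] (hℓ : ℓ ≠ p) :
    ∃ r x z : ℤ_[ℓ], r ^ 2 + q * x ^ 2 + p + q * p * z ^ 2 = 0 := by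
  rcases eq_or_ne ℓ 2 with rfl | hℓ2
  -- `-(q + p + q p) ≡ 1 (mod 8)`, because `4 ∣ 1 + q` and `2 ∣ 1 + p`.
  · have h8 : 8 ∣ q + p + q * p + 1 := by
      rw [show q + p + q * p + 1 = (1 + q) * (1 + p) by ring]
      exact mul_dvd_mul (show 4 ∣ 1 + q by omega) (show 2 ∣ 1 + p by omega)
    obtain ⟨s, hs⟩ := PadicInt.exists_sq_add_eq_zero_of_eight_dvd (d := q + p + q * p)
      (by exact_mod_cast Nat.cast_dvd_cast (α := ℤ_[2]) h8)
    exact ⟨s, 1, 1, by linear_combination hs⟩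
  have hp0 := ZMod.natCast_ne_zero_of_prime_of_ne (Fact.out : p.Prime) hℓ
  have h2 : (2 : ZMod ℓ) ≠ 0 := Ring.two_ne_zero (by rwa [ZMod.ringChar_zmod_n])
  rcases eq_or_ne ℓ q with rfl | hℓq
  · obtain ⟨a, ha⟩ := isSquare_neg_of_legendreSym_eq_neg_one hp4 hq4 hleg
    have ha0 : a ≠ 0 := by rintro rfl; exact hp0 (by simpa using ha)
    obtain ⟨s, hs⟩ := PadicInt.exists_mul_sq_add_eq_zero (c := 1) (d := p) (a := a)
      (by simp only [map_one, one_mul, map_natCast]; linear_combination -ha)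
      (by simpa using mul_ne_zero h2 ha0)
    exact ⟨s, 0, 0, by linear_combination hs⟩
  · have hq0 := ZMod.natCast_ne_zero_of_prime_of_ne (Fact.out : q.Prime) hℓq
    obtain ⟨r, x, h⟩ := PadicInt.exists_sq_add_mul_sq_add_eq_zero hℓ2 (b := q) (c := p)
      (by simpa using hq0) (by simpa using hp0)
    exact ⟨r, x, 0, by linear_combination h⟩

/-- For primes `p ≡ 1 (mod 4)`, `q ≡ 3 (mod 4)` with `q` a nonsquare mod `p`, the
quaternion algebra `ℍ[ℚ, -q, -p]` is the definite quaternion algebra of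
discriminant `p`: it is division exactly at `ℝ` and at the prime `p`. -/
theorem quaternionAlgebra_neg_q_neg_p_discriminant
    (p q : ℕ) [Fact p.Prime] [Fact q.Prime]
    (hp4 : p % 4 = 1) (hq4 : q % 4 = 3) (hleg : legendreSym p q = -1) :
    (∀ (ℓ : ℕ) [Fact ℓ.Prime],
      ((∀ x : ℍ[ℚ_[ℓ], (-(q : ℚ_[ℓ])), (-(p : ℚ_[ℓ]))], x ≠ 0 → IsUnit x) ↔ ℓ = p)) ∧
    (∀ x : ℍ[ℝ, (-(q : ℝ)), (-(p : ℝ))], x ≠ 0 → IsUnit x) := by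
  refine ⟨fun ℓ _ => ?_, QuaternionAlgebra.forall_ne_zero_isUnit_of_pos
    (Nat.cast_pos.2 (Fact.out : q.Prime).pos) (Nat.cast_pos.2 (Fact.out : p.Prime).pos)⟩
  simp only [QuaternionAlgebra.forall_ne_zero_isUnit_iff, QuaternionAlgebra.re_mul_star_neg_neg]
  constructor
  · intro h
    by_contra hℓ
    obtain ⟨r, x, z, hrxz⟩ := exists_sq_add_mul_sq_add_add_mul_sq_eq_zero_of_ne hp4 hq4 hleg ℓ hℓ
    have := h ⟨r, x, 1, z⟩ (by simpa using congrArg ((↑) : ℤ_[ℓ] → ℚ_[ℓ]) hrxz)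
    exact one_ne_zero (congrArg QuaternionAlgebra.imJ this)
  · rintro rfl a ha
    obtain ⟨h₁, h₂, h₃, h₄⟩ := Padic.eq_zero_of_sq_add_mul_sq_add_p_mul (c := q)
      (r := a.re) (x := a.imI) (y := a.imJ) (z := a.imK)
      (by simpa using not_isSquare_neg_of_legendreSym_eq_neg_one hp4 hleg)
      (by push_cast; linear_combination ha)
    exact QuaternionAlgebra.ext h₁ h₂ h₃ h₄
end

section
/- Let a, b be nonzero integers, q an odd prime with q ∣ a and q ∤ b, and let f, g, h be nonzero integers with q ∤ f·g·h, h squarefree, and h ∣ (a/q). Let x be an integer with x² ≡ b (mod q). In B = ℍ[ℚ, a, b], let O be the ℤ-submodule spanned by 1, g·i, f·h·j, f·g·k, and let O' be the ℤ-submodule spanned by 1, g·i, f·h·j, f·g·k, and (f·g/q)·(x·i + k). Then: (i) O ⊆ O'; (ii) q·O' ⊆ O; (iii) O' is closed under multiplication (so O' is an order containing O); and (iv) O' ≠ O. (Adjoining the element q⁻¹(x − j)·i = q⁻¹(x·i + k), scaled by fg, enlarges the order O exactly at q, lowering its level from qN to N.) -/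
/-! The products of the generators of `O'` are integral combinations of them: the only
denominators come from `w = (fg/q)(x·i + k)`, and they cancel because `q·h ∣ a` and
`q ∣ b - x²` (for instance `w² = -f²g²·(a/q)·(b - x²)/q`). Moreover `q·w = fx·(g·i) + fg·k ∈ O`,
while the `k`-coordinate of every element of `O` is an integer multiple of `fg`, and that of `w`
is `fg/q`. -/

open Quaternion Submodule

theorem Submodule.smul_mem_of_mem_span {R M : Type*} [CommSemiring R] [AddCommMonoid M]
    [Module R M] {S : Set M} {N : Submodule R M} {c : R} (hS : ∀ s ∈ S, c • s ∈ N) {v : M}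
    (hv : v ∈ span R S) : c • v ∈ N := by
  induction hv using span_induction with
  | mem s hs => exact hS s hs
  | zero => simp
  | add u w _ _ hu hw => rw [smul_add]; exact add_mem hu hw
  | smul t u _ hu => rw [smul_comm]; exact N.smul_mem t hu

theorem Submodule.mul_mem_span_range {R A ι : Type*} [CommSemiring R] [Semiring A] [Algebra R A]
    [Fintype ι] {e : ι → A} (c : ι → ι → ι → R) (he : ∀ i j, e i * e j = ∑ k, c i j k • e k)
    {u v : A} (hu : u ∈ span R (Set.range e)) (hv : v ∈ span R (Set.range e)) :
    u * v ∈ span R (Set.range e) := by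
  have huv := mul_mem_mul hu hv
  rw [span_mul_span] at huv
  refine span_le.mpr ?_ huv
  rintro _ ⟨_, ⟨i, rfl⟩, _, ⟨j, rfl⟩, rfl⟩
  show e i * e j ∈ span R (Set.range e)
  rw [he]
  exact sum_mem fun k _ ↦ smul_mem _ _ (subset_span ⟨k, rfl⟩)

theorem QuaternionAlgebra.imK_mem_zmultiples_of_mem_span {R : Type*} [CommRing R] {c₁ c₂ c₃ : R}
    {S : Set ℍ[R, c₁, c₂, c₃]} {r : R} (hS : ∀ s ∈ S, s.imK ∈ AddSubgroup.zmultiples r)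
    {v : ℍ[R, c₁, c₂, c₃]} (hv : v ∈ span ℤ S) : v.imK ∈ AddSubgroup.zmultiples r :=
  (span_le (p := (AddSubgroup.zmultiples r).toIntSubmodule.comap
    ((imKₗ (c₁ := c₁) (c₂ := c₂) (c₃ := c₃)).restrictScalars ℤ))).mpr hS hv

theorem div_notMem_zmultiples_self {K : Type*} [Field K] [LinearOrder K] [IsStrictOrderedRing K]
    {r : K} (hr : r ≠ 0) {q : ℕ} (hq : 1 < q) : r / q ∉ AddSubgroup.zmultiples r := by
  rintro ⟨n, hn : n • r = r / q⟩
  rw [zsmul_eq_mul, eq_div_iff (by positivity), mul_right_comm, mul_left_eq_self₀] at hn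
  have hnq : n * (q : ℤ) = 1 := by exact_mod_cast hn.resolve_right hr
  have := Int.eq_one_of_mul_eq_one_left (by positivity) hnq
  omega

section EnlargedOrder

variable {a b : ℤ} (f g h x : ℤ) (q : ℕ)

def orderGens : Set ℍ[ℚ, (a : ℚ), (b : ℚ)] :=
  {1, ⟨0, (g : ℚ), 0, 0⟩, ⟨0, 0, (f : ℚ) * h, 0⟩, ⟨0, 0, 0, (f : ℚ) * g⟩}

def enlargedGens : Fin 5 → ℍ[ℚ, (a : ℚ), (b : ℚ)] :=
  ![1, ⟨0, (g : ℚ), 0, 0⟩, ⟨0, 0, (f : ℚ) * h, 0⟩, ⟨0, 0, 0, (f : ℚ) * g⟩,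
    ⟨0, (f : ℚ) * g * x / q, 0, (f : ℚ) * g / q⟩]

theorem range_enlargedGens :
    Set.range (enlargedGens (a := a) (b := b) f g h x q) =
      {1, ⟨0, (g : ℚ), 0, 0⟩, ⟨0, 0, (f : ℚ) * h, 0⟩, ⟨0, 0, 0, (f : ℚ) * g⟩,
        ⟨0, (f : ℚ) * g * x / q, 0, (f : ℚ) * g / q⟩} := by
  simp only [enlargedGens, Matrix.range_cons, Matrix.range_empty, Set.union_empty,
    Set.singleton_union]

theorem orderGens_subset_range_enlargedGens :
    orderGens (a := a) (b := b) f g h ⊆ Set.range (enlargedGens f g h x q) := by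
  rintro _ (rfl | rfl | rfl | rfl)
  exacts [⟨0, rfl⟩, ⟨1, rfl⟩, ⟨2, rfl⟩, ⟨3, rfl⟩]

/-- `h'` and `c` stand for the cofactors in `a = q·h·h'` and `b = x² + q·c`. -/
def enlargedMulCoeffs (a b c h' : ℤ) : Fin 5 → Fin 5 → Fin 5 → ℤ :=
  ![fun j ↦ Pi.single j 1,
    ![Pi.single 1 1, ![a * g ^ 2, 0, 0, 0, 0], ![0, 0, 0, h, 0], ![0, 0, q * g ^ 2 * h', 0, 0],
      ![f * g ^ 2 * h * h' * x, 0, g ^ 2 * h', 0, 0]],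
    ![Pi.single 2 1, ![0, 0, 0, -h, 0], ![f ^ 2 * h ^ 2 * b, 0, 0, 0, 0],
      ![0, -(f ^ 2 * h * b), 0, 0, 0], ![0, -(f ^ 2 * h * c), 0, 0, -(f * h * x)]],
    ![Pi.single 3 1, ![0, 0, -(q * g ^ 2 * h'), 0, 0], ![0, f ^ 2 * h * b, 0, 0, 0],
      ![-(a * b * f ^ 2 * g ^ 2), 0, 0, 0, 0],
      ![-(f ^ 2 * g ^ 2 * h * h' * b), 0, -(f * g ^ 2 * h' * x), 0, 0]],
    ![Pi.single 4 1, ![f * g ^ 2 * h * h' * x, 0, -(g ^ 2 * h'), 0, 0],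
      ![0, f ^ 2 * h * c, 0, 0, f * h * x],
      ![-(f ^ 2 * g ^ 2 * h * h' * b), 0, f * g ^ 2 * h' * x, 0, 0],
      ![-(f ^ 2 * g ^ 2 * h * h' * c), 0, 0, 0, 0]]]

theorem enlargedGens_mul_enlargedGens {c h' : ℤ} (hq : q ≠ 0) (ha : a = q * h * h')
    (hb : b = x ^ 2 + q * c) (i j : Fin 5) :
    enlargedGens (a := a) (b := b) f g h x q i * enlargedGens f g h x q j =
      ∑ k, enlargedMulCoeffs f g h x q a b c h' i j k • enlargedGens f g h x q k := by
  have hq : (q : ℚ) ≠ 0 := by exact_mod_cast hq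
  subst ha hb
  fin_cases i <;> fin_cases j <;> ext <;>
    simp only [Fin.reduceFinMk, Fin.isValue, enlargedMulCoeffs, enlargedGens, Fin.sum_univ_five,
      Matrix.cons_val, Pi.single_apply, ↓reduceIte, one_mul, mul_one, QuaternionAlgebra.mk_mul_mk,
      QuaternionAlgebra.re_add, QuaternionAlgebra.imI_add, QuaternionAlgebra.imJ_add,
      QuaternionAlgebra.imK_add, QuaternionAlgebra.re_smul, QuaternionAlgebra.imI_smul,
      QuaternionAlgebra.imJ_smul, QuaternionAlgebra.imK_smul, QuaternionAlgebra.re_one,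
      QuaternionAlgebra.imI_one, QuaternionAlgebra.imJ_one, QuaternionAlgebra.imK_one] <;>
    push_cast [zsmul_eq_mul] <;> (try field_simp) <;> ring

theorem natCast_smul_enlargedGens_four (hq : q ≠ 0) :
    (q : ℤ) • enlargedGens (a := a) (b := b) f g h x q 4 =
      (f * x) • enlargedGens f g h x q 1 + enlargedGens f g h x q 3 := by
  have hq : (q : ℚ) ≠ 0 := by exact_mod_cast hq
  ext <;> simp [enlargedGens] <;> field_simp

theorem natCast_smul_enlargedGens_mem_span_orderGens (hq : q ≠ 0) (i : Fin 5) :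
    (q : ℤ) • enlargedGens (a := a) (b := b) f g h x q i ∈ span ℤ (orderGens f g h) := by
  fin_cases i
  iterate 4 exact smul_mem _ _ (subset_span (by simp [orderGens, enlargedGens]))
  change (q : ℤ) • enlargedGens f g h x q 4 ∈ _
  rw [natCast_smul_enlargedGens_four f g h x q hq]
  exact add_mem (smul_mem _ _ (subset_span (by simp [orderGens, enlargedGens])))
    (subset_span (by simp [orderGens, enlargedGens]))

theorem enlargedGens_four_notMem_span_orderGens (hf : f ≠ 0) (hg : g ≠ 0) (hq : 1 < q) :
    enlargedGens (a := a) (b := b) f g h x q 4 ∉ span ℤ (orderGens f g h) := by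
  intro hmem
  have hfg : (f : ℚ) * g ≠ 0 := by positivity
  refine div_notMem_zmultiples_self hfg hq
    (QuaternionAlgebra.imK_mem_zmultiples_of_mem_span ?_ hmem)
  rintro _ (rfl | rfl | rfl | rfl)
  exacts [zero_mem _, zero_mem _, zero_mem _, AddSubgroup.mem_zmultiples _]

end EnlargedOrder

theorem lower_level_q_dvd_a_general
    (a b : ℤ)
    (q : ℕ) (hq : q.Prime)
    (hqa : (q : ℤ) ∣ a)
    (f g h : ℤ) (hf : f ≠ 0) (hg : g ≠ 0)
    (hha : h ∣ (a / q))
    (x : ℤ) (hx : x ^ 2 ≡ b [ZMOD (q : ℤ)])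
    (O O' : Submodule ℤ ℍ[ℚ, (a : ℚ), (b : ℚ)])
    (hO : O = Submodule.span ℤ
      ({1, ⟨0, (g : ℚ), 0, 0⟩, ⟨0, 0, (f : ℚ) * h, 0⟩, ⟨0, 0, 0, (f : ℚ) * g⟩} :
        Set ℍ[ℚ, (a : ℚ), (b : ℚ)]))
    (hO' : O' = Submodule.span ℤ
      ({1, ⟨0, (g : ℚ), 0, 0⟩, ⟨0, 0, (f : ℚ) * h, 0⟩, ⟨0, 0, 0, (f : ℚ) * g⟩,
        ⟨0, (f : ℚ) * g * x / q, 0, (f : ℚ) * g / q⟩} :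
        Set ℍ[ℚ, (a : ℚ), (b : ℚ)])) :
    O ≤ O' ∧
    (∀ v ∈ O', (q : ℤ) • v ∈ O) ∧
    (∀ u ∈ O', ∀ v ∈ O', u * v ∈ O') ∧
    O' ≠ O := by
  obtain ⟨h', ha⟩ : ∃ h', a = q * h * h' := by
    obtain ⟨a', rfl⟩ := hqa
    obtain ⟨h', rfl⟩ : h ∣ a' := by simpa [hq.ne_zero] using hha
    exact ⟨h', by ring⟩
  obtain ⟨c, hc⟩ := hx.dvd
  have hb : b = x ^ 2 + q * c := by linarith
  rw [← range_enlargedGens] at hO'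
  subst hO hO'
  refine ⟨span_mono (orderGens_subset_range_enlargedGens f g h x q), fun v hv ↦ ?_,
    fun u hu v hv ↦ mul_mem_span_range _
      (enlargedGens_mul_enlargedGens f g h x q hq.ne_zero ha hb) hu hv, fun heq ↦ ?_⟩
  · exact smul_mem_of_mem_span
      (Set.forall_mem_range.2 (natCast_smul_enlargedGens_mem_span_orderGens f g h x q hq.ne_zero)) hv
  · exact enlargedGens_four_notMem_span_orderGens f g h x q hf hg hq.one_lt
      (heq ▸ subset_span (Set.mem_range_self 4))

/-- Adjoining `(fg/q)·(x·i + k)` to the order spanned by `1, g·i, fh·j, fg·k`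
in `ℍ[ℚ, a, b]` (with `q ∣ a`, `q ∤ b`, `x² ≡ b mod q`) enlarges it exactly at `q`. -/
theorem lower_level_q_dvd_a
    (a b : ℤ) (ha : a ≠ 0) (hb : b ≠ 0)
    (q : ℕ) (hq : q.Prime) (hq2 : q ≠ 2)
    (hqa : (q : ℤ) ∣ a) (hqb : ¬ (q : ℤ) ∣ b)
    (f g h : ℤ) (hf : f ≠ 0) (hg : g ≠ 0) (hh : h ≠ 0)
    (hqfgh : ¬ (q : ℤ) ∣ f * g * h) (hsf : Squarefree h) (hha : h ∣ (a / q))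
    (x : ℤ) (hx : x ^ 2 ≡ b [ZMOD (q : ℤ)])
    (O O' : Submodule ℤ ℍ[ℚ, (a : ℚ), (b : ℚ)])
    (hO : O = Submodule.span ℤ
      ({1, ⟨0, (g : ℚ), 0, 0⟩, ⟨0, 0, (f : ℚ) * h, 0⟩, ⟨0, 0, 0, (f : ℚ) * g⟩} :
        Set ℍ[ℚ, (a : ℚ), (b : ℚ)]))
    (hO' : O' = Submodule.span ℤ
      ({1, ⟨0, (g : ℚ), 0, 0⟩, ⟨0, 0, (f : ℚ) * h, 0⟩, ⟨0, 0, 0, (f : ℚ) * g⟩,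
        ⟨0, (f : ℚ) * g * x / q, 0, (f : ℚ) * g / q⟩} :
        Set ℍ[ℚ, (a : ℚ), (b : ℚ)])) :
    O ≤ O' ∧
    (∀ v ∈ O', (q : ℤ) • v ∈ O) ∧
    (∀ u ∈ O', ∀ v ∈ O', u * v ∈ O') ∧
    O' ≠ O :=
  lower_level_q_dvd_a_general a b q hq hqa f g h hf hg hha x hx O O' hO hO'
end
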